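/- Let û : ℝ≥0 → ℂ⁶ solve the Fourier-transformed Model II system with m = 6 as above. Then ∂ₜ( a₆·ξ·Re(û₁·conj(û₄)) − a₅·Re(i·û₁·conj(û₆)) ) − a₄·a₆·ξ²·Re(i·û₁·conj(û₃)) + a₆·ξ²·Re(i·û₂·conj(û₄)) + a₅·ξ·Re(û₂·conj(û₆)) = 0 for all t ≥ 0. -/

import Mathlib

open Complex ComplexConjugate

theorem HasDerivAt.re_mul_conj {f g : ℝ → ℂ} {f' g' : ℂ} {t : ℝ}
    (hf : HasDerivAt f f' t) (hg : HasDerivAt g g' t) :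
    HasDerivAt (fun s => (f s * conj (g s)).re) (f' * conj (g t) + f t * conj g').re t :=
  reCLM.hasFDerivAt.comp_hasDerivAt t (hf.mul hg.star)

theorem stmt16_general (ξ a₄ a₅ a₆ : ℝ)
    (u : ℝ → Fin 6 → ℂ)
    (hdiff : ∀ j : Fin 6, ∀ t : ℝ, 0 ≤ t → DifferentiableAt ℝ (fun s => u s j) t)
    (h1 : ∀ t : ℝ, 0 ≤ t →
      deriv (fun s => u s 0) t + I * (ξ : ℂ) * u t 1 = 0)
    (h4 : ∀ t : ℝ, 0 ≤ t →
      deriv (fun s => u s 3) t + I * (ξ : ℂ) * (a₄ : ℂ) * u t 2 + (a₅ : ℂ) * u t 4 = 0)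
    (h6 : ∀ t : ℝ, 0 ≤ t →
      deriv (fun s => u s 5) t + I * (ξ : ℂ) * (a₆ : ℂ) * u t 4 = 0) :
    ∀ t : ℝ, 0 ≤ t →
      deriv (fun s => a₆ * ξ * (u s 0 * (starRingEnd ℂ) (u s 3)).re
          - a₅ * (I * u s 0 * (starRingEnd ℂ) (u s 5)).re) t
      - a₄ * a₆ * ξ^2 * (I * u t 0 * (starRingEnd ℂ) (u t 2)).re
      + a₆ * ξ^2 * (I * u t 1 * (starRingEnd ℂ) (u t 3)).re
      + a₅ * ξ * (u t 1 * (starRingEnd ℂ) (u t 5)).re = 0 := by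
  intro t ht
  have hu₀ : HasDerivAt (fun s => u s 0) (-(I * ξ * u t 1)) t :=
    (hdiff 0 t ht).hasDerivAt.congr_deriv (by linear_combination h1 t ht)
  have hu₃ : HasDerivAt (fun s => u s 3) (-(I * ξ * a₄ * u t 2 + a₅ * u t 4)) t :=
    (hdiff 3 t ht).hasDerivAt.congr_deriv (by linear_combination h4 t ht)
  have hu₅ : HasDerivAt (fun s => u s 5) (-(I * ξ * a₆ * u t 4)) t :=
    (hdiff 5 t ht).hasDerivAt.congr_deriv (by linear_combination h6 t ht)
  have hF : HasDerivAt (fun s => a₆ * ξ * (u s 0 * conj (u s 3)).re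
      - a₅ * (I * u s 0 * conj (u s 5)).re) _ t :=
    ((hu₀.re_mul_conj hu₃).const_mul (a₆ * ξ)).sub (((hu₀.const_mul I).re_mul_conj hu₅).const_mul a₅)
  rw [hF.deriv]
  -- The `a₅ a₆ ξ Re(û₁ conj û₅)` terms coming from equations 4 and 6 cancel.
  simp only [map_add, map_neg, map_mul, conj_I, conj_ofReal, add_re, neg_re, mul_re, mul_im,
    add_im, neg_im, I_re, I_im, ofReal_re, ofReal_im, conj_re, conj_im]
  ring

/-- Dissipation identity (3.4) for the Fourier-transformed Model II system with m = 6. -/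
theorem stmt16 (γ ξ a₄ a₅ a₆ : ℝ) (hγ : 0 < γ)
    (ha₄ : a₄ ≠ 0) (ha₅ : a₅ ≠ 0) (ha₆ : a₆ ≠ 0)
    (u : ℝ → Fin 6 → ℂ)
    (hdiff : ∀ j : Fin 6, ∀ t : ℝ, 0 ≤ t → DifferentiableAt ℝ (fun s => u s j) t)
    (h1 : ∀ t : ℝ, 0 ≤ t →
      deriv (fun s => u s 0) t + I * (ξ : ℂ) * u t 1 = 0)
    (h2 : ∀ t : ℝ, 0 ≤ t →
      deriv (fun s => u s 1) t + I * (ξ : ℂ) * u t 0 + (γ : ℂ) * u t 1 + u t 2 = 0)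
    (h3 : ∀ t : ℝ, 0 ≤ t →
      deriv (fun s => u s 2) t + I * (ξ : ℂ) * (a₄ : ℂ) * u t 3 - u t 1 = 0)
    (h4 : ∀ t : ℝ, 0 ≤ t →
      deriv (fun s => u s 3) t + I * (ξ : ℂ) * (a₄ : ℂ) * u t 2 + (a₅ : ℂ) * u t 4 = 0)
    (h5 : ∀ t : ℝ, 0 ≤ t →
      deriv (fun s => u s 4) t + I * (ξ : ℂ) * (a₆ : ℂ) * u t 5 - (a₅ : ℂ) * u t 3 = 0)
    (h6 : ∀ t : ℝ, 0 ≤ t →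
      deriv (fun s => u s 5) t + I * (ξ : ℂ) * (a₆ : ℂ) * u t 4 = 0) :
    ∀ t : ℝ, 0 ≤ t →
      deriv (fun s => a₆ * ξ * (u s 0 * (starRingEnd ℂ) (u s 3)).re
          - a₅ * (I * u s 0 * (starRingEnd ℂ) (u s 5)).re) t
      - a₄ * a₆ * ξ^2 * (I * u t 0 * (starRingEnd ℂ) (u t 2)).re
      + a₆ * ξ^2 * (I * u t 1 * (starRingEnd ℂ) (u t 3)).re
      + a₅ * ξ * (u t 1 * (starRingEnd ℂ) (u t 5)).re = 0 :=
  stmt16_general ξ a₄ a₅ a₆ u hdiff h1 h4 h6
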